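/- Let Ω be a finite set with at least two elements, let G be a solvable subgroup of Sym(Ω) acting primitively on Ω, let A be a minimal normal subgroup of G, and fix x ∈ Ω. Let G_x = {g ∈ G : g(x) = x} be the stabilizer of x in G. Then G is the (internal) semidirect product of A and G_x: A ∩ G_x is trivial and every element g ∈ G can be written as g = a·h with a ∈ A and h ∈ G_x (i.e., G_x is a complement of A in G). -/

import Mathlib

/-- A group action is preprimitive if it is pretransitive and every block is trivial.
This matches Mathlib's `MulAction.IsPreprimitive`. -/
def IsPreprimitiveAction (G X : Type*) [Group G] [MulAction G X] : Prop :=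
  MulAction.IsPretransitive G X ∧
    ∀ B : Set X, MulAction.IsBlock G B → MulAction.IsTrivialBlock B

/-- `A` is a minimal normal subgroup of `G`: it is nontrivial, normal, and the only normal
subgroup of `G` properly contained in it is the trivial one. -/
def IsMinimalNormal {G : Type*} [Group G] (A : Subgroup G) : Prop :=
  A ≠ ⊥ ∧ A.Normal ∧ ∀ B : Subgroup G, B.Normal → B < A → B = ⊥

/-!
A minimal normal subgroup `A` of a solvable group is abelian, since `⁅A, A⁆` is a
normal subgroup properly contained in `A`. In a faithful primitive action a nontrivial normal
subgroup is transitive, and a transitive abelian group of permutations acts regularly: an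
element fixing `x` commutes with the elements carrying `x` to any other point, so it fixes
every point. Regularity gives `A ⊓ G_x = ⊥`, and transitivity of `A` gives `G = A * G_x`.
-/

open MulAction

theorem IsPreprimitiveAction.isPreprimitive {G X : Type*} [Group G] [MulAction G X]
    (h : IsPreprimitiveAction G X) : IsPreprimitive G X :=
  have := h.1
  ⟨fun hB ↦ h.2 _ hB⟩

section

variable {G : Type*} [Group G]

theorem IsMinimalNormal.isMulCommutative [Group.IsSolvable G] {A : Subgroup G}
    (hA : IsMinimalNormal A) : IsMulCommutative A := by
  obtain ⟨hA_ne_bot, hA_normal, hA_min⟩ := hA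
  rw [← Subgroup.commutator_self_eq_bot_iff]
  exact hA_min _ inferInstance (Group.IsSolvable.commutator_lt_of_ne_bot hA_ne_bot)

variable {X : Type*} [MulAction G X]

theorem IsMinimalNormal.isPretransitive [IsPreprimitive G X] [FaithfulSMul G X]
    {A : Subgroup G} (hA : IsMinimalNormal A) : IsPretransitive A X := by
  obtain ⟨hA_ne_bot, hA_normal, -⟩ := hA
  refine IsQuasiPreprimitive.isPretransitive_of_normal fun h_fixed ↦ hA_ne_bot ?_
  refine (Subgroup.eq_bot_iff_forall A).mpr fun a ha ↦ eq_of_smul_eq_smul (α := X) fun y ↦ ?_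
  rw [one_smul]
  exact Set.eq_univ_iff_forall.mp h_fixed y ⟨a, ha⟩

theorem Subgroup.exists_mem_mul_mem_stabilizer {N : Subgroup G} [IsPretransitive N X]
    (x : X) (g : G) : ∃ a ∈ N, ∃ h ∈ stabilizer G x, g = a * h := by
  obtain ⟨a, ha⟩ := MulAction.exists_smul_eq N x (g • x)
  refine ⟨a, a.2, (a : G)⁻¹ * g, ?_, by group⟩
  rw [mem_stabilizer_iff, mul_smul, ← ha, Subgroup.smul_def, inv_smul_smul]

theorem Subgroup.inf_stabilizer_eq_bot [FaithfulSMul G X] {N : Subgroup G} [IsMulCommutative N]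
    [IsPretransitive N X] (x : X) : N ⊓ stabilizer G x = ⊥ := by
  refine (Subgroup.eq_bot_iff_forall _).mpr fun a ⟨haN, hax⟩ ↦
    eq_of_smul_eq_smul (α := X) fun y ↦ ?_
  obtain ⟨b, rfl⟩ := MulAction.exists_smul_eq N x y
  rw [one_smul, Subgroup.smul_def, smul_smul, setLike_mul_comm haN b.2,
    mul_smul, mem_stabilizer_iff.mp hax]

end

theorem stabilizer_is_complement_of_minimal_normal_general {Ω : Type*}
    (G : Subgroup (Equiv.Perm Ω)) (hsolv : IsSolvable G)
    (hprim : IsPreprimitiveAction G Ω)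
    (A : Subgroup G) (hA : IsMinimalNormal A) (x : Ω) :
    A ⊓ MulAction.stabilizer G x = ⊥ ∧
      ∀ g : G, ∃ a ∈ A, ∃ h ∈ MulAction.stabilizer G x, g = a * h := by
  have : Group.IsSolvable G := hsolv
  have := hprim.isPreprimitive
  have := hA.isMulCommutative
  have := hA.isPretransitive (X := Ω)
  exact ⟨A.inf_stabilizer_eq_bot x, A.exists_mem_mul_mem_stabilizer x⟩

/-- If `G` is a solvable subgroup of the symmetric group of a finite set `Ω` with at least
two elements, acting primitively on `Ω`, `A` is a minimal normal subgroup of `G`, and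
`x ∈ Ω`, then `G` is the internal semidirect product of `A` and the stabilizer `G_x`:
`A ∩ G_x` is trivial and every `g ∈ G` can be written as `g = a * h` with `a ∈ A`,
`h ∈ G_x`. -/
theorem stabilizer_is_complement_of_minimal_normal {Ω : Type*} [Fintype Ω]
    (h2 : 2 ≤ Fintype.card Ω)
    (G : Subgroup (Equiv.Perm Ω)) (hsolv : IsSolvable G)
    (hprim : IsPreprimitiveAction G Ω)
    (A : Subgroup G) (hA : IsMinimalNormal A) (x : Ω) :
    A ⊓ MulAction.stabilizer G x = ⊥ ∧
      ∀ g : G, ∃ a ∈ A, ∃ h ∈ MulAction.stabilizer G x, g = a * h :=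
  stabilizer_is_complement_of_minimal_normal_general G hsolv hprim A hA x
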